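/- Let A be a graded algebra over a field k with A = A^{-1} ⊕ A^0 ⊕ A^1 (as a complex/dg algebra with some differential d : A^0 → A^1 and d : A^{-1} → A^0), and suppose e_1, …, e_n ∈ A^0 are orthogonal idempotents summing to 1 that are cocycles. For each i,j choose a linear complement V^1_{ij} of d(e_i A^0 e_j) inside e_i A^1 e_j, and set V := (⊕_j k·e_j) ⊕ (⊕_{i,j} V^1_{ij}). If H^{-1}(A) = 0 and H^0(A) = ⊕_j k·e_j, then V is a dg subalgebra of A and the inclusion V ↪ A is a quasi-isomorphism. -/

import Mathlib

open BigOperators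

/-- Let `A = A⁻¹ ⊕ A⁰ ⊕ A¹` be a dg algebra over a field `k` concentrated
in degrees `-1, 0, 1` (with differential `d` of degree `+1` satisfying the signed
Leibniz rule), and let `e₁, …, e_n ∈ A⁰` be orthogonal idempotents summing to `1` that
are cocycles. For each `i, j` let `V¹_{ij}` be a linear complement of `d(eᵢ A⁰ eⱼ)`
inside `eᵢ A¹ eⱼ`, and set `V := (⊕ⱼ k·eⱼ) ⊕ (⊕_{ij} V¹_{ij})`. If `H⁻¹(A) = 0` and
`H⁰(A) = ⊕ⱼ k·eⱼ`, then `V` is a dg subalgebra of `A` and the inclusion `V ↪ A` is a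
quasi-isomorphism (isomorphisms on cohomology in degrees `-1`, `0` and `1`). -/
theorem stmt2 (k : Type*) [Field k] (A : Type*) [Ring A] [Algebra k A]
    (Am A0 A1 : Submodule k A)
    -- `A = A⁻¹ ⊕ A⁰ ⊕ A¹` as a `k`-module
    (hdecomp : ∀ x : A, ∃ xm ∈ Am, ∃ x0 ∈ A0, ∃ x1 ∈ A1, x = xm + x0 + x1)
    (hindep : ∀ xm ∈ Am, ∀ x0 ∈ A0, ∀ x1 ∈ A1,
      xm + x0 + x1 = 0 → xm = 0 ∧ x0 = 0 ∧ x1 = 0)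
    -- graded multiplication (`A` vanishes in degrees `±2`)
    (hone : (1 : A) ∈ A0)
    (hmul00 : ∀ x ∈ A0, ∀ y ∈ A0, x * y ∈ A0)
    (hmul0m : ∀ x ∈ A0, ∀ y ∈ Am, x * y ∈ Am) (hmulm0 : ∀ x ∈ Am, ∀ y ∈ A0, x * y ∈ Am)
    (hmul01 : ∀ x ∈ A0, ∀ y ∈ A1, x * y ∈ A1) (hmul10 : ∀ x ∈ A1, ∀ y ∈ A0, x * y ∈ A1)
    (hmulm1 : ∀ x ∈ Am, ∀ y ∈ A1, x * y ∈ A0) (hmul1m : ∀ x ∈ A1, ∀ y ∈ Am, x * y ∈ A0)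
    (hmulmm : ∀ x ∈ Am, ∀ y ∈ Am, x * y = 0) (hmul11 : ∀ x ∈ A1, ∀ y ∈ A1, x * y = 0)
    -- the differential, of degree `+1`, `d² = 0`, signed Leibniz rule
    (d : A →ₗ[k] A)
    (hdm : ∀ x ∈ Am, d x ∈ A0) (hd0 : ∀ x ∈ A0, d x ∈ A1) (hd1 : ∀ x ∈ A1, d x = 0)
    (hdd : ∀ x : A, d (d x) = 0)
    (hleib0 : ∀ x ∈ A0, ∀ y : A, d (x * y) = d x * y + x * d y)
    (hleibm : ∀ x ∈ Am, ∀ y : A, d (x * y) = d x * y - x * d y)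
    (hleib1 : ∀ x ∈ A1, ∀ y : A, d (x * y) = d x * y - x * d y)
    -- the orthogonal idempotent cocycles `e₁, …, e_n ∈ A⁰` summing to `1`
    (n : ℕ) (e : Fin n → A) (he : ∀ i, e i ∈ A0)
    (hidem : ∀ i, e i * e i = e i) (horth : ∀ i j, i ≠ j → e i * e j = 0)
    (hsum : ∑ i, e i = 1) (hcocycle : ∀ i, d (e i) = 0)
    -- `V¹_{ij}`: a complement of `d(eᵢ A⁰ eⱼ)` inside `eᵢ A¹ eⱼ`
    (V1 : Fin n → Fin n → Submodule k A)
    (hV1le : ∀ i j, ∀ x ∈ V1 i j, x ∈ A1 ∧ e i * x * e j = x)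
    (hV1span : ∀ i j, ∀ x ∈ A1, e i * x * e j = x →
      ∃ v ∈ V1 i j, ∃ a ∈ A0, e i * a * e j = a ∧ x = v + d a)
    (hV1disj : ∀ i j, ∀ v ∈ V1 i j,
      (∃ a ∈ A0, e i * a * e j = a ∧ v = d a) → v = 0)
    -- `H⁻¹(A) = 0`
    (hHm : ∀ x ∈ Am, d x = 0 → x = 0)
    -- `H⁰(A) = ⊕ⱼ k·eⱼ`
    (hH0span : ∀ x ∈ A0, d x = 0 →
      ∃ (c : Fin n → k), ∃ y ∈ Am, x = (∑ i, c i • e i) + d y)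
    (hH0indep : ∀ (c : Fin n → k), ∀ y ∈ Am,
      (∑ i, c i • e i) = d y → ∀ i, c i = 0) :
    -- `V` is a dg subalgebra of `A`:
    (1 : A) ∈ (Submodule.span k (Set.range e) ⊔ ⨆ (i) (j), V1 i j) ∧
    (∀ x ∈ (Submodule.span k (Set.range e) ⊔ ⨆ (i) (j), V1 i j),
      ∀ y ∈ (Submodule.span k (Set.range e) ⊔ ⨆ (i) (j), V1 i j),
        x * y ∈ (Submodule.span k (Set.range e) ⊔ ⨆ (i) (j), V1 i j)) ∧
    (∀ x ∈ (Submodule.span k (Set.range e) ⊔ ⨆ (i) (j), V1 i j),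
      d x ∈ (Submodule.span k (Set.range e) ⊔ ⨆ (i) (j), V1 i j)) ∧
    -- the inclusion `V ↪ A` is a quasi-isomorphism:
    -- degree `-1`: both `H⁻¹(V)` and `H⁻¹(A)` vanish
    (∀ x ∈ (Submodule.span k (Set.range e) ⊔ ⨆ (i) (j), V1 i j) ⊓ Am, x = 0) ∧
    -- degree `0`: `V⁰ = ⊕ k·eⱼ → H⁰(A)` is surjective and injective
    (∀ x ∈ A0, d x = 0 → ∃ v ∈ Submodule.span k (Set.range e), ∃ y ∈ Am, x = v + d y) ∧
    (∀ v ∈ Submodule.span k (Set.range e), (∃ y ∈ Am, v = d y) → v = 0) ∧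
    -- degree `1`: `V¹ = ⊕ V¹_{ij} → H¹(A) = A¹/d(A⁰)` is surjective and injective
    (∀ x ∈ A1, ∃ v ∈ (⨆ (i) (j), V1 i j), ∃ a ∈ A0, x = v + d a) ∧
    (∀ v ∈ (⨆ (i) (j), V1 i j), (∃ a ∈ A0, v = d a) → v = 0) := by

  classical
  set S := Submodule.span k (Set.range e) with hS
  set W := (⨆ (i) (j), V1 i j : Submodule k A) with hW
  -- basic inclusions
  have hV1W : ∀ i j, V1 i j ≤ W := fun i j =>
    le_trans (le_iSup (fun j => V1 i j) j) (le_iSup (fun i => ⨆ j, V1 i j) i)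
  have hWA1 : W ≤ A1 := by
    apply iSup_le; intro i; apply iSup_le; intro j
    intro x hx; exact (hV1le i j x hx).1
  have hSA0 : S ≤ A0 := by
    rw [hS, Submodule.span_le]; rintro _ ⟨i, rfl⟩; exact he i
  -- sandwich for V1 elements
  have heV1 : ∀ (i a b : Fin n), ∀ v ∈ V1 a b, e i * v = if i = a then v else 0 := by
    intro i a b v hv
    have hv2 := (hV1le a b v hv).2
    have key : e i * v = (e i * e a) * v * e b := by
      conv_lhs => rw [← hv2]
      noncomm_ring
    by_cases hia : i = a
    · subst hia; rw [key, hidem, hv2, if_pos rfl]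
    · rw [key, horth i a hia, zero_mul, zero_mul, if_neg hia]
  have hV1e : ∀ (j a b : Fin n), ∀ v ∈ V1 a b, v * e j = if j = b then v else 0 := by
    intro j a b v hv
    have hv2 := (hV1le a b v hv).2
    have key : v * e j = e a * v * (e b * e j) := by
      conv_lhs => rw [← hv2]
      noncomm_ring
    by_cases hjb : j = b
    · subst hjb; rw [key, hidem, hv2, if_pos rfl]
    · rw [key, horth b j (Ne.symm hjb), mul_zero, if_neg hjb]
  have hsand : ∀ i j a b, ∀ v ∈ V1 a b,
      e i * v * e j = if i = a ∧ j = b then v else 0 := by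
    intro i j a b v hv
    rw [heV1 i a b v hv]
    by_cases hia : i = a
    · rw [if_pos hia, hV1e j a b v hv]
      by_cases hjb : j = b
      · rw [if_pos hjb, if_pos ⟨hia, hjb⟩]
      · rw [if_neg hjb, if_neg (fun h => hjb h.2)]
    · rw [if_neg hia, zero_mul, if_neg (fun h => hia h.1)]
  -- decomposition of any element by the idempotents
  have hdecom : ∀ x : A, ∑ i, ∑ j, e i * x * e j = x := by
    intro x
    have : ∀ i, ∑ j, e i * x * e j = e i * x := by
      intro i
      rw [← Finset.mul_sum, hsum, mul_one]
    rw [Finset.sum_congr rfl (fun i _ => this i), ← Finset.sum_mul, hsum, one_mul]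
  -- projection of W lands in V1 i j
  have hproj : ∀ i j, ∀ w ∈ W, e i * w * e j ∈ V1 i j := by
    intro i j w hw
    have key : ∀ a b, ∀ v ∈ V1 a b, e i * v * e j ∈ V1 i j := by
      intro a b v hv
      rw [hsand i j a b v hv]
      split
      · rcases ‹i = a ∧ j = b› with ⟨rfl, rfl⟩; exact hv
      · exact zero_mem _
    refine Submodule.iSup_induction (motive := fun x => e i * x * e j ∈ V1 i j)
      (fun a => ⨆ b, V1 a b) hw ?_ ?_ ?_
    · intro a v hv
      refine Submodule.iSup_induction (motive := fun x => e i * x * e j ∈ V1 i j)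
        (fun b => V1 a b) hv ?_ ?_ ?_
      · intro b v hv; exact key a b v hv
      · simp
      · intro x y hx hy
        have : e i * (x + y) * e j = e i * x * e j + e i * y * e j := by noncomm_ring
        rw [this]; exact add_mem hx hy
    · simp
    · intro x y hx hy
      have : e i * (x + y) * e j = e i * x * e j + e i * y * e j := by noncomm_ring
      rw [this]; exact add_mem hx hy
  -- multiplication closure pieces
  have hmulSS : ∀ s ∈ S, ∀ t ∈ S, s * t ∈ S := by
    intro s hs
    induction hs using Submodule.span_induction with
    | mem x hx =>
      obtain ⟨i, rfl⟩ := hx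
      intro t ht
      induction ht using Submodule.span_induction with
      | mem y hy =>
        obtain ⟨j, rfl⟩ := hy
        by_cases hij : i = j
        · subst hij; rw [hidem]; exact Submodule.subset_span ⟨i, rfl⟩
        · rw [horth i j hij]; exact zero_mem _
      | zero => rw [mul_zero]; exact zero_mem _
      | add x y hx hy ihx ihy => rw [mul_add]; exact add_mem ihx ihy
      | smul a x hx ih => rw [mul_smul_comm]; exact Submodule.smul_mem _ _ ih
    | zero => intro t ht; rw [zero_mul]; exact zero_mem _
    | add x y hx hy ihx ihy =>
      intro t ht; rw [add_mul]; exact add_mem (ihx t ht) (ihy t ht)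
    | smul a x hx ih =>
      intro t ht; rw [smul_mul_assoc]; exact Submodule.smul_mem _ _ (ih t ht)
  have heW : ∀ i, ∀ w ∈ W, e i * w ∈ W := by
    intro i w hw
    refine Submodule.iSup_induction (motive := fun x => e i * x ∈ W)
      (fun a => ⨆ b, V1 a b) hw ?_ ?_ ?_
    · intro a v hv
      refine Submodule.iSup_induction (motive := fun x => e i * x ∈ W)
        (fun b => V1 a b) hv ?_ ?_ ?_
      · intro b v hv
        rw [heV1 i a b v hv]
        by_cases hia : i = a
        · rw [if_pos hia]; exact hV1W a b hv
        · rw [if_neg hia]; exact zero_mem _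
      · simp
      · intro x y hx hy; rw [mul_add]; exact add_mem hx hy
    · simp
    · intro x y hx hy; rw [mul_add]; exact add_mem hx hy
  have hWe : ∀ j, ∀ w ∈ W, w * e j ∈ W := by
    intro j w hw
    refine Submodule.iSup_induction (motive := fun x => x * e j ∈ W)
      (fun a => ⨆ b, V1 a b) hw ?_ ?_ ?_
    · intro a v hv
      refine Submodule.iSup_induction (motive := fun x => x * e j ∈ W)
        (fun b => V1 a b) hv ?_ ?_ ?_
      · intro b v hv
        rw [hV1e j a b v hv]
        by_cases hjb : j = b
        · rw [if_pos hjb]; exact hV1W a b hv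
        · rw [if_neg hjb]; exact zero_mem _
      · simp
      · intro x y hx hy; rw [add_mul]; exact add_mem hx hy
    · simp
    · intro x y hx hy; rw [add_mul]; exact add_mem hx hy
  have hmulSW : ∀ s ∈ S, ∀ w ∈ W, s * w ∈ W := by
    intro s hs
    induction hs using Submodule.span_induction with
    | mem x hx => obtain ⟨i, rfl⟩ := hx; exact heW i
    | zero => intro w hw; rw [zero_mul]; exact zero_mem _
    | add x y hx hy ihx ihy =>
      intro w hw; rw [add_mul]; exact add_mem (ihx w hw) (ihy w hw)
    | smul a x hx ih =>
      intro w hw; rw [smul_mul_assoc]; exact Submodule.smul_mem _ _ (ih w hw)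
  have hmulWS : ∀ w ∈ W, ∀ s ∈ S, w * s ∈ W := by
    intro w hw s hs
    induction hs using Submodule.span_induction with
    | mem x hx => obtain ⟨j, rfl⟩ := hx; exact hWe j w hw
    | zero => rw [mul_zero]; exact zero_mem _
    | add x y hx hy ihx ihy => rw [mul_add]; exact add_mem ihx ihy
    | smul a x hx ih => rw [mul_smul_comm]; exact Submodule.smul_mem _ _ ih
  have hdS : ∀ s ∈ S, d s = 0 := by
    intro s hs
    induction hs using Submodule.span_induction with
    | mem x hx => obtain ⟨i, rfl⟩ := hx; exact hcocycle i
    | zero => exact map_zero d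
    | add x y hx hy ihx ihy => rw [map_add, ihx, ihy, add_zero]
    | smul a x hx ih => rw [map_smul, ih, smul_zero]
  refine ⟨?_, ?_, ?_, ?_, ?_, ?_, ?_, ?_⟩
  · -- 1 ∈ V
    apply Submodule.mem_sup_left
    rw [← hsum]
    exact Submodule.sum_mem _ fun i _ => Submodule.subset_span ⟨i, rfl⟩
  · -- multiplicative closure
    intro x hx y hy
    obtain ⟨s, hs, w, hw, rfl⟩ := Submodule.mem_sup.mp hx
    obtain ⟨t, ht, u, hu, rfl⟩ := Submodule.mem_sup.mp hy
    have hwu : w * u = 0 := hmul11 w (hWA1 hw) u (hWA1 hu)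
    have : (s + w) * (t + u) = s * t + (s * u + w * t + w * u) := by noncomm_ring
    rw [this, hwu, add_zero]
    exact add_mem (Submodule.mem_sup_left (hmulSS s hs t ht))
      (Submodule.mem_sup_right (add_mem (hmulSW s hs u hu) (hmulWS w hw t ht)))
  · -- d closure
    intro x hx
    obtain ⟨s, hs, w, hw, rfl⟩ := Submodule.mem_sup.mp hx
    rw [map_add, hdS s hs, hd1 w (hWA1 hw), add_zero]
    exact zero_mem _
  · -- H⁻¹ of V vanishes
    intro x hx
    obtain ⟨hxV, hxm⟩ := hx
    obtain ⟨s, hs, w, hw, hxsw⟩ := Submodule.mem_sup.mp hxV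
    have h0 : x + (-s) + (-w) = 0 := by rw [← hxsw]; abel
    exact (hindep x hxm (-s) (neg_mem (hSA0 hs)) (-w) (neg_mem (hWA1 hw)) h0).1
  · -- H⁰ surjectivity
    intro x hx hdx
    obtain ⟨c, y, hy, hxy⟩ := hH0span x hx hdx
    exact ⟨∑ i, c i • e i,
      Submodule.sum_mem _ fun i _ => Submodule.smul_mem _ _ (Submodule.subset_span ⟨i, rfl⟩),
      y, hy, hxy⟩
  · -- H⁰ injectivity
    intro v hv ⟨y, hy, hvy⟩
    obtain ⟨c, rfl⟩ := (Submodule.mem_span_range_iff_exists_fun k).mp hv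
    have := hH0indep c y hy hvy
    simp only [this, zero_smul, Finset.sum_const_zero]
  · -- H¹ surjectivity
    intro x hx
    have hxij : ∀ i j : Fin n, e i * x * e j ∈ A1 := fun i j =>
      hmul10 _ (hmul01 _ (he i) x hx) _ (he j)
    have hsij : ∀ i j : Fin n, e i * (e i * x * e j) * e j = e i * x * e j := by
      intro i j
      calc e i * (e i * x * e j) * e j = (e i * e i) * x * (e j * e j) := by noncomm_ring
        _ = e i * x * e j := by rw [hidem, hidem]
    choose v hv a ha hsa hx2 using fun i j => hV1span i j _ (hxij i j) (hsij i j)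
    refine ⟨∑ i, ∑ j, v i j, ?_, ∑ i, ∑ j, a i j, ?_, ?_⟩
    · exact Submodule.sum_mem _ fun i _ => Submodule.sum_mem _ fun j _ => hV1W i j (hv i j)
    · exact Submodule.sum_mem _ fun i _ => Submodule.sum_mem _ fun j _ => ha i j
    · conv_lhs => rw [← hdecom x]
      rw [map_sum, ← Finset.sum_add_distrib]
      refine Finset.sum_congr rfl fun i _ => ?_
      rw [map_sum, ← Finset.sum_add_distrib]
      exact Finset.sum_congr rfl fun j _ => hx2 i j
  · -- H¹ injectivity
    intro v hv ⟨a, ha, hva⟩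
    have hvij : ∀ i j : Fin n, e i * v * e j ∈ V1 i j := fun i j => hproj i j v hv
    have haij : ∀ i j : Fin n, e i * a * e j ∈ A0 := fun i j =>
      hmul00 _ (hmul00 _ (he i) a ha) _ (he j)
    have hsaij : ∀ i j : Fin n, e i * (e i * a * e j) * e j = e i * a * e j := by
      intro i j
      calc e i * (e i * a * e j) * e j = (e i * e i) * a * (e j * e j) := by noncomm_ring
        _ = e i * a * e j := by rw [hidem, hidem]
    have hdaij : ∀ i j : Fin n, d (e i * a * e j) = e i * d a * e j := by
      intro i j
      rw [mul_assoc, hleib0 (e i) (he i) (a * e j), hcocycle i, zero_mul, zero_add,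
        hleib0 a ha (e j), hcocycle j, mul_zero, add_zero, mul_assoc]
    have hzero : ∀ i j : Fin n, e i * v * e j = 0 := by
      intro i j
      apply hV1disj i j _ (hvij i j)
      exact ⟨e i * a * e j, haij i j, hsaij i j, by rw [hdaij i j, ← hva]⟩
    calc v = ∑ i, ∑ j, e i * v * e j := (hdecom v).symm
      _ = 0 := by
        rw [Finset.sum_congr rfl fun i _ => Finset.sum_congr rfl fun j _ => hzero i j]
        simp
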